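/- Maximal monotone graphs equal to a monotone extension: let A, Ã ⊆ ℝ^d × ℝ^d be maximally monotone graphs. If Ã contains a monotone graph which contains {(z, a(z)) : z ∈ D} for a dense set D ⊆ ℝ^d where a is a selection of A, and A is maximally monotone, then Ã = A (graphs of two maximally monotone maps containing a common monotone graph whose domain projection is dense coincide). -/

import Mathlib

open scoped RealInnerProductSpace

/-- A graph `G ⊆ ℝ^d × ℝ^d` is monotone if `(η₁−η₂)·(ξ₁−ξ₂) ≥ 0` for all pairs in it. -/
def MonotoneGraph {d : ℕ} (G : Set (EuclideanSpace ℝ (Fin d) × EuclideanSpace ℝ (Fin d))) :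
    Prop :=
  ∀ p ∈ G, ∀ q ∈ G, 0 ≤ ⟪p.2 - q.2, p.1 - q.1⟫

/-- A graph is maximally monotone if it is monotone and has no proper monotone extension. -/
def MaximallyMonotoneGraph {d : ℕ}
    (G : Set (EuclideanSpace ℝ (Fin d) × EuclideanSpace ℝ (Fin d))) : Prop :=
  MonotoneGraph G ∧ ∀ B, MonotoneGraph B → G ⊆ B → B = G

/-!
A selection `a` of a monotone graph is a monotone map on all of `ℝ^d`, hence locally bounded
(test monotonicity against the `2d` points `x ± eᵢ`). So for every `x`, points `(z, a z)` with
`z ∈ D`, `z → x`, have a cluster point `(x, ξ)`; maximally monotone graphs are closed, so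
`(x, ξ)` lies in both `A` and `Ã`. Two maximally monotone graphs with a common point above every
`x` coincide: for `(x, ξ) ∈ Ã` and `(y, η) ∈ A`, a common point `(m, ζ)` above the midpoint `m`
of `x` and `y` gives `⟪ξ - η, x - y⟫ = 2 ⟪ξ - ζ, x - m⟫ + 2 ⟪ζ - η, m - y⟫ ≥ 0`, so
`(x, ξ) ∈ A` by maximality.
-/

open Filter Topology

section MonotoneMap

variable {E : Type*} [NormedAddCommGroup E] [InnerProductSpace ℝ E]

lemma OrthonormalBasis.norm_le_sum_abs_inner {ι : Type*} [Fintype ι]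
    (b : OrthonormalBasis ι ℝ E) (v : E) : ‖v‖ ≤ ∑ i, |⟪b i, v⟫| := by
  calc ‖v‖ = ‖∑ i, ⟪b i, v⟫ • b i‖ := by rw [b.sum_repr']
    _ ≤ ∑ i, ‖⟪b i, v⟫ • b i‖ := norm_sum_le _ _
    _ = ∑ i, |⟪b i, v⟫| := by simp [norm_smul]

lemma inner_le_of_monotone {a : E → E} (ha : ∀ z w, 0 ≤ ⟪a z - a w, z - w⟫) {x y z : E}
    (hy : ‖y - x‖ ≤ 1) (hz : ‖z - x‖ ≤ 1) :
    ⟪a z, y - x⟫ ≤ ‖a z‖ * ‖z - x‖ + 2 * ‖a y‖ := by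
  have hyz : ‖y - z‖ ≤ 2 := by
    calc ‖y - z‖ = ‖(y - x) - (z - x)‖ := by rw [sub_sub_sub_cancel_right]
      _ ≤ ‖y - x‖ + ‖z - x‖ := norm_sub_le _ _
      _ ≤ 2 := by linarith
  have hmono : ⟪a z, y - z⟫ ≤ ⟪a y, y - z⟫ := by
    simpa only [inner_sub_left, sub_nonneg] using ha y z
  calc ⟪a z, y - x⟫ = ⟪a z, y - z⟫ + ⟪a z, z - x⟫ := by
        rw [← inner_add_right, sub_add_sub_cancel]
    _ ≤ ‖a y‖ * ‖y - z‖ + ‖a z‖ * ‖z - x‖ :=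
        add_le_add (hmono.trans (real_inner_le_norm _ _)) (real_inner_le_norm _ _)
    _ ≤ ‖a y‖ * 2 + ‖a z‖ * ‖z - x‖ := by gcongr
    _ = ‖a z‖ * ‖z - x‖ + 2 * ‖a y‖ := by ring

lemma abs_inner_le_of_monotone {a : E → E} (ha : ∀ z w, 0 ≤ ⟪a z - a w, z - w⟫) {x u z : E}
    (hu : ‖u‖ = 1) (hz : ‖z - x‖ ≤ 1) :
    |⟪u, a z⟫| ≤ ‖a z‖ * ‖z - x‖ + 2 * (‖a (x + u)‖ + ‖a (x - u)‖) := by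
  have hplus := inner_le_of_monotone ha (y := x + u) (by simp [hu]) hz
  have hminus := inner_le_of_monotone ha (y := x - u) (by simp [hu]) hz
  rw [add_sub_cancel_left, real_inner_comm] at hplus
  rw [sub_sub_cancel_left, inner_neg_right, real_inner_comm] at hminus
  rw [abs_le]
  constructor <;> nlinarith [norm_nonneg (a (x + u)), norm_nonneg (a (x - u))]

theorem exists_eventually_norm_le_of_monotone [FiniteDimensional ℝ E] {a : E → E}
    (ha : ∀ z w, 0 ≤ ⟪a z - a w, z - w⟫) (x : E) : ∃ M, ∀ᶠ z in 𝓝 x, ‖a z‖ ≤ M := by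
  let b := stdOrthonormalBasis ℝ E
  set n : ℕ := Module.finrank ℝ E
  set C := ∑ i, 2 * (‖a (x + b i)‖ + ‖a (x - b i)‖)
  set r : ℝ := 1 / (2 * (n + 1))
  have hr : 0 < r := by positivity
  have hnr : n * r ≤ 1 / 2 := by
    rw [mul_one_div, div_le_div_iff₀ (by positivity) two_pos]
    linarith
  have hr1 : r ≤ 1 := by
    rw [div_le_one (by positivity)]
    linarith [(n.cast_nonneg : (0 : ℝ) ≤ n)]
  refine ⟨2 * C, Metric.eventually_nhds_iff_ball.2 ⟨r, hr, fun z hz => ?_⟩⟩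
  have hzx : ‖z - x‖ ≤ r := by rw [← dist_eq_norm]; exact (Metric.mem_ball.1 hz).le
  have hsum : ‖a z‖ ≤ ∑ i, (‖a z‖ * r + 2 * (‖a (x + b i)‖ + ‖a (x - b i)‖)) := by
    refine (b.norm_le_sum_abs_inner (a z)).trans (Finset.sum_le_sum fun i _ => ?_)
    refine (abs_inner_le_of_monotone ha (b.orthonormal.1 i) (hzx.trans hr1)).trans ?_
    gcongr
  rw [Finset.sum_add_distrib, Finset.sum_const, Finset.card_univ, Fintype.card_fin,
    nsmul_eq_mul] at hsum
  nlinarith [norm_nonneg (a z)]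

theorem exists_tendsto_graph_of_dense_of_monotone [FiniteDimensional ℝ E] {a : E → E}
    (ha : ∀ z w, 0 ≤ ⟪a z - a w, z - w⟫) {D : Set E} (hD : Dense D) (x : E) :
    ∃ ξ : E, ∃ u : ℕ → E, (∀ n, u n ∈ D) ∧
      Tendsto (fun n => (u n, a (u n))) atTop (𝓝 (x, ξ)) := by
  obtain ⟨M, hM⟩ := exists_eventually_norm_le_of_monotone ha x
  obtain ⟨u, huD, hux⟩ := mem_closure_iff_seq_limit.1 (hD x)
  have hbdd : ∃ᶠ n in atTop, a (u n) ∈ Metric.closedBall 0 M :=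
    ((hux.eventually hM).mono fun n hn => mem_closedBall_zero_iff.2 hn).frequently
  obtain ⟨ξ, -, φ, hφ, hξ⟩ :=
    tendsto_subseq_of_frequently_bounded Metric.isBounded_closedBall hbdd
  exact ⟨ξ, u ∘ φ, fun n => huD (φ n), (hux.comp hφ.tendsto_atTop).prodMk_nhds hξ⟩

end MonotoneMap

section Graphs

variable {d : ℕ} {A B : Set (EuclideanSpace ℝ (Fin d) × EuclideanSpace ℝ (Fin d))}

namespace MaximallyMonotoneGraph

lemma mem_of_forall_inner_nonneg (hA : MaximallyMonotoneGraph A)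
    {p : EuclideanSpace ℝ (Fin d) × EuclideanSpace ℝ (Fin d)}
    (hp : ∀ q ∈ A, 0 ≤ ⟪p.2 - q.2, p.1 - q.1⟫) : p ∈ A := by
  have hmono : MonotoneGraph (insert p A) := by
    rintro q (rfl | hq) q' (rfl | hq')
    · simp
    · exact hp q' hq'
    · rw [← inner_neg_neg, neg_sub, neg_sub]
      exact hp q hq
    · exact hA.1 q hq q' hq'
  exact hA.2 _ hmono (Set.subset_insert p A) ▸ Set.mem_insert p A

lemma isClosed (hA : MaximallyMonotoneGraph A) : IsClosed A := by
  have hA_eq : A = ⋂ q ∈ A, {p | 0 ≤ ⟪p.2 - q.2, p.1 - q.1⟫} := by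
    ext p
    simp only [Set.mem_iInter, Set.mem_ofPred_eq]
    exact ⟨fun hp q hq => hA.1 p hp q hq, hA.mem_of_forall_inner_nonneg⟩
  rw [hA_eq]
  exact isClosed_biInter fun q _ =>
    isClosed_le continuous_const ((continuous_snd.sub continuous_const).inner
      (continuous_fst.sub continuous_const))

lemma eq_of_forall_exists_mem_inter (hA : MaximallyMonotoneGraph A)
    (hB : MaximallyMonotoneGraph B) (hAB : ∀ x, ∃ ξ, (x, ξ) ∈ A ∧ (x, ξ) ∈ B) : B = A := by
  refine (hB.2 A hA.1 fun ⟨x, ξ⟩ hxξ => hA.mem_of_forall_inner_nonneg ?_).symm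
  rintro ⟨y, η⟩ hyη
  obtain ⟨ζ, hζA, hζB⟩ := hAB (midpoint ℝ x y)
  have hx := hB.1 _ hxξ _ hζB
  have hy := hA.1 _ hζA _ hyη
  simp only [left_sub_midpoint, midpoint_sub_right, real_inner_smul_right] at hx hy
  have hsum := add_nonneg hx hy
  rw [← mul_add, ← inner_add_left, sub_add_sub_cancel] at hsum
  exact nonneg_of_mul_nonneg_right hsum (by norm_num)

end MaximallyMonotoneGraph

end Graphs

theorem maximally_monotone_graphs_coincide_general {d : ℕ}
    (A Atilde G : Set (EuclideanSpace ℝ (Fin d) × EuclideanSpace ℝ (Fin d)))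
    (a : EuclideanSpace ℝ (Fin d) → EuclideanSpace ℝ (Fin d))
    (D : Set (EuclideanSpace ℝ (Fin d)))
    (hA : MaximallyMonotoneGraph A) (hAt : MaximallyMonotoneGraph Atilde)
    (hD : Dense D)
    (hsel : ∀ z, (z, a z) ∈ A)
    (hGD : {p : EuclideanSpace ℝ (Fin d) × EuclideanSpace ℝ (Fin d) |
            ∃ z ∈ D, p = (z, a z)} ⊆ G)
    (hGA : G ⊆ Atilde) :
    Atilde = A := by
  have ha : ∀ z w, 0 ≤ ⟪a z - a w, z - w⟫ := fun z w => hA.1 _ (hsel z) _ (hsel w)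
  refine hA.eq_of_forall_exists_mem_inter hAt fun x => ?_
  obtain ⟨ξ, u, huD, hu⟩ := exists_tendsto_graph_of_dense_of_monotone ha hD x
  exact ⟨ξ, hA.isClosed.mem_of_tendsto hu (.of_forall fun n => hsel (u n)),
    hAt.isClosed.mem_of_tendsto hu (.of_forall fun n => hGA (hGD ⟨u n, huD n, rfl⟩))⟩

/-- Two maximally monotone graphs containing a common monotone graph, which in turn contains
`{(z, a z) : z ∈ D}` for a dense set `D` and a selection `a` of `A`, must coincide. -/
theorem maximally_monotone_graphs_coincide {d : ℕ}
    (A Atilde G : Set (EuclideanSpace ℝ (Fin d) × EuclideanSpace ℝ (Fin d)))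
    (a : EuclideanSpace ℝ (Fin d) → EuclideanSpace ℝ (Fin d))
    (D : Set (EuclideanSpace ℝ (Fin d)))
    (hA : MaximallyMonotoneGraph A) (hAt : MaximallyMonotoneGraph Atilde)
    (hG : MonotoneGraph G)
    (hD : Dense D)
    (hsel : ∀ z, (z, a z) ∈ A)
    (hGD : {p : EuclideanSpace ℝ (Fin d) × EuclideanSpace ℝ (Fin d) |
            ∃ z ∈ D, p = (z, a z)} ⊆ G)
    (hGA : G ⊆ Atilde) :
    Atilde = A :=
  maximally_monotone_graphs_coincide_general A Atilde G a D hA hAt hD hsel hGD hGA
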